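/- Let G be a finite simple graph of order n. Then γ_cer(G) = n if and only if every vertex of G is isolated (degree zero), or is a leaf, or is adjacent to exactly one leaf. (Equivalently, G is the complement of a complete graph, the corona of a graph, or the union of both.) -/

import Mathlib

open Finset

variable {V : Type*} [Fintype V] [DecidableEq V]

/-- `D` is a dominating set of `G`: every vertex outside `D` has a neighbour in `D`. -/
def IsDomSet (G : SimpleGraph V) (D : Finset V) : Prop :=
  ∀ v ∉ D, ∃ u ∈ D, G.Adj u v

/-- `D` is a certified dominating set of `G`: it is dominating and every vertex of `D`
has either zero or at least two neighbours outside `D`. -/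
def IsCertDomSet (G : SimpleGraph V) [DecidableRel G.Adj] (D : Finset V) : Prop :=
  IsDomSet G D ∧ ∀ v ∈ D, (G.neighborFinset v \ D).card = 0 ∨ 2 ≤ (G.neighborFinset v \ D).card

/-- The domination number: minimum cardinality of a dominating set. -/
noncomputable def gamma (G : SimpleGraph V) : ℕ :=
  sInf {n | ∃ D : Finset V, IsDomSet G D ∧ D.card = n}

/-- The certified domination number: minimum cardinality of a certified dominating set. -/
noncomputable def gammaCer (G : SimpleGraph V) [DecidableRel G.Adj] : ℕ :=
  sInf {n | ∃ D : Finset V, IsCertDomSet G D ∧ D.card = n}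

/-- A leaf is a vertex of degree one. -/
abbrev IsLeaf (G : SimpleGraph V) [DecidableRel G.Adj] (v : V) : Prop := G.degree v = 1

/-- The set of leaf-neighbours of a vertex. -/
abbrev leafNbrs (G : SimpleGraph V) [DecidableRel G.Adj] (v : V) : Finset V :=
  (G.neighborFinset v).filter (fun l => G.degree l = 1)

/-- A weak support is a vertex adjacent to exactly one leaf. -/
abbrev IsWeakSupport (G : SimpleGraph V) [DecidableRel G.Adj] (v : V) : Prop :=
  (leafNbrs G v).card = 1

/-- A strong support is a vertex adjacent to at least two leaves. -/
abbrev IsStrongSupport (G : SimpleGraph V) [DecidableRel G.Adj] (v : V) : Prop :=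
  2 ≤ (leafNbrs G v).card

/-!
A vertex outside a certified dominating set `D` is seen by a vertex of `D` that has a second
neighbour outside `D`, and every vertex adjacent to a leaf lies in `D`. If every vertex is
isolated, a leaf or adjacent to exactly one leaf, the two outside neighbours would be two leaves
of one vertex, so `D` is everything.

Conversely, call a vertex free if it has degree at least two and no leaf neighbour. Given a
vertex of degree at least two that is not adjacent to exactly one leaf, a proper certified
dominating set is obtained by removing all free vertices except a maximal independent set of
those free vertices whose neighbours are all free, together with the leaves of every vertex that
has at least two neighbours which are leaves or free.
-/

namespace SimpleGraph

variable (G : SimpleGraph V) [DecidableRel G.Adj]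

def IsFree (v : V) : Prop := 2 ≤ G.degree v ∧ leafNbrs G v = ∅

instance (v : V) : Decidable (G.IsFree v) := inferInstanceAs (Decidable (_ ∧ _))

def freeInterior : Finset V := {v | G.IsFree v ∧ ∀ w ∈ G.neighborFinset v, G.IsFree w}

def looseNbrs (v : V) : Finset V := {x ∈ G.neighborFinset v | IsLeaf G x ∨ G.IsFree x}

/-- For `J` a maximal independent subset of `freeInterior`, the complement of this set is a
certified dominating set. -/
def certOutside (J : Finset V) : Finset V :=
  {v | (G.IsFree v ∧ v ∉ J) ∨
    (IsLeaf G v ∧ ∃ w ∈ G.neighborFinset v, 2 ≤ #(G.looseNbrs w))}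

variable {G}

omit [DecidableEq V] in
lemma mem_leafNbrs {v x : V} : x ∈ leafNbrs G v ↔ G.Adj v x ∧ IsLeaf G x := by
  simp [leafNbrs]

omit [DecidableEq V] in
lemma eq_of_adj_of_isLeaf {l a b : V} (hl : IsLeaf G l) (ha : G.Adj l a) (hb : G.Adj l b) :
    a = b := by
  obtain ⟨w, -, hw⟩ := degree_eq_one_iff_existsUnique_adj.mp hl
  exact (hw a ha).trans (hw b hb).symm

omit [DecidableEq V] in
lemma card_leafNbrs_le_degree (v : V) : #(leafNbrs G v) ≤ G.degree v :=
  (card_filter_le _ _).trans_eq (card_neighborFinset_eq_degree G v)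

omit [DecidableEq V] in
lemma IsFree.not_isLeaf {v : V} (hv : G.IsFree v) : ¬IsLeaf G v := by
  have := hv.1
  omega

omit [DecidableEq V] in
lemma IsFree.not_isLeaf_of_adj {f x : V} (hf : G.IsFree f) (h : G.Adj f x) : ¬IsLeaf G x :=
  fun hx => by simpa [hf.2] using (mem_leafNbrs (G := G)).mpr ⟨h, hx⟩

lemma mem_freeInterior {v : V} :
    v ∈ G.freeInterior ↔ G.IsFree v ∧ ∀ w, G.Adj v w → G.IsFree w := by
  simp [freeInterior]

lemma exists_isIndepSet_forall_adj (P : Finset V) :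
    ∃ J ⊆ P, G.IsIndepSet (J : Set V) ∧ ∀ v ∈ P, v ∉ J → ∃ u ∈ J, G.Adj u v := by
  obtain ⟨J, ⟨hJP, hJind⟩, hJmax⟩ :=
    (Set.toFinite {J : Finset V | J ⊆ P ∧ G.IsIndepSet J}).exists_maximal ⟨∅, by simp⟩
  refine ⟨J, hJP, hJind, fun v hvP hvJ => ?_⟩
  by_contra! hv
  have hins : insert v J ⊆ P ∧ G.IsIndepSet (insert v J : Finset V) := by
    refine ⟨insert_subset hvP hJP, ?_⟩
    rw [coe_insert]
    exact hJind.insert fun u hu _ => ⟨fun h => hv u hu h.symm, hv u hu⟩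
  exact hvJ (hJmax hins (subset_insert v J) (mem_insert_self v J))

section certOutside

variable {J : Finset V}

lemma mem_certOutside {v : V} : v ∈ G.certOutside J ↔ (G.IsFree v ∧ v ∉ J) ∨
    (IsLeaf G v ∧ ∃ w ∈ G.neighborFinset v, 2 ≤ #(G.looseNbrs w)) := by
  simp [certOutside]

lemma notMem_certOutside {v : V} (hl : ¬IsLeaf G v) (hf : ¬G.IsFree v) :
    v ∉ G.certOutside J := by
  simp [mem_certOutside, hl, hf]

lemma exists_adj_notMem_certOutside (hJ : J ⊆ G.freeInterior)
    (hJdom : ∀ v ∈ G.freeInterior, v ∉ J → ∃ u ∈ J, G.Adj u v) {s : V}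
    (hs : s ∈ G.certOutside J) : ∃ u ∉ G.certOutside J, G.Adj u s := by
  rcases mem_certOutside.mp hs with ⟨hsf, hsJ⟩ | ⟨hsl, w, hsw, hw⟩
  · by_cases hsi : s ∈ G.freeInterior
    · obtain ⟨u, huJ, hus⟩ := hJdom s hsi hsJ
      have huf := (mem_freeInterior.mp (hJ huJ)).1
      refine ⟨u, ?_, hus⟩
      simp [mem_certOutside, huJ, huf.not_isLeaf]
    · obtain ⟨w, hsw, hwf⟩ : ∃ w, G.Adj s w ∧ ¬G.IsFree w := by
        simpa [mem_freeInterior, hsf] using hsi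
      exact ⟨w, notMem_certOutside (hsf.not_isLeaf_of_adj hsw) hwf, hsw.symm⟩
  · rw [mem_neighborFinset] at hsw
    refine ⟨w, notMem_certOutside (fun hwl => ?_) (fun hwf => hwf.not_isLeaf_of_adj hsw.symm hsl),
      hsw.symm⟩
    have : #(G.looseNbrs w) ≤ 1 :=
      (card_filter_le _ _).trans (card_neighborFinset_eq_degree G w ▸ hwl.le)
    omega

lemma two_le_card_looseNbrs {u x : V} (huf : ¬G.IsFree u) (hux : G.Adj u x)
    (hx : x ∈ G.certOutside J) : 2 ≤ #(G.looseNbrs u) := by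
  rcases mem_certOutside.mp hx with ⟨hxf, -⟩ | ⟨hxl, w, hxw, hw⟩
  · have hdeg : 2 ≤ G.degree u := by
      have := (G.degree_pos_iff_exists_adj u).mpr ⟨x, hux⟩
      have := hxf.not_isLeaf_of_adj hux.symm
      omega
    obtain ⟨l, hl⟩ := nonempty_iff_ne_empty.mpr fun h => huf ⟨hdeg, h⟩
    obtain ⟨hul, hl⟩ := mem_leafNbrs.mp hl
    have hlx : l ≠ x := by rintro rfl; exact hxf.not_isLeaf hl
    refine card_pair hlx ▸ card_le_card (insert_subset_iff.mpr
      ⟨?_, singleton_subset_iff.mpr ?_⟩)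
    exacts [mem_filter.mpr ⟨by simpa using hul, .inl hl⟩,
      mem_filter.mpr ⟨by simpa using hux, .inr hxf⟩]
  · rwa [eq_of_adj_of_isLeaf hxl (mem_neighborFinset _ _ _ |>.mp hxw) hux.symm] at hw

lemma looseNbrs_subset_certOutside (hJ : J ⊆ G.freeInterior) {u : V} (huf : ¬G.IsFree u)
    (h2 : 2 ≤ #(G.looseNbrs u)) : G.looseNbrs u ⊆ G.certOutside J := by
  intro x hx
  simp only [looseNbrs, mem_filter, mem_neighborFinset] at hx
  obtain ⟨hux, hxl | hxf⟩ := hx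
  · exact mem_certOutside.mpr (.inr ⟨hxl, u, by simpa using hux.symm, h2⟩)
  · refine mem_certOutside.mpr (.inl ⟨hxf, fun hxJ => huf ?_⟩)
    exact (mem_freeInterior.mp (hJ hxJ)).2 u hux.symm

lemma card_neighborFinset_inter_certOutside_ne_one (hJ : J ⊆ G.freeInterior)
    (hJind : G.IsIndepSet (J : Set V)) {u : V} (hu : u ∉ G.certOutside J) :
    #(G.neighborFinset u ∩ G.certOutside J) ≠ 1 := by
  by_cases huJ : u ∈ J
  · obtain ⟨huf, hnbr⟩ := mem_freeInterior.mp (hJ huJ)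
    have hall : G.neighborFinset u ∩ G.certOutside J = G.neighborFinset u := by
      refine inter_eq_left.mpr fun x hx => ?_
      rw [mem_neighborFinset] at hx
      exact mem_certOutside.mpr (.inl ⟨hnbr x hx, fun hxJ => hJind huJ hxJ hx.ne hx⟩)
    rw [hall, card_neighborFinset_eq_degree]
    have := huf.1
    omega
  have huf : ¬G.IsFree u := fun huf => hu (mem_certOutside.mpr (.inl ⟨huf, huJ⟩))
  by_cases h2 : 2 ≤ #(G.looseNbrs u)
  · have hloose : G.neighborFinset u ∩ G.certOutside J = G.looseNbrs u := by
      refine Subset.antisymm (fun x hx => ?_) (subset_inter (filter_subset _ _)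
        (looseNbrs_subset_certOutside hJ huf h2))
      obtain ⟨hux, hx⟩ := mem_inter.mp hx
      have : IsLeaf G x ∨ G.IsFree x := by
        rcases mem_certOutside.mp hx with h | h
        exacts [.inr h.1, .inl h.1]
      exact mem_filter.mpr ⟨hux, this⟩
    rw [hloose]
    omega
  · have hempty : G.neighborFinset u ∩ G.certOutside J = ∅ := by
      refine eq_empty_of_forall_notMem fun x hx => h2 ?_
      obtain ⟨hux, hx⟩ := mem_inter.mp hx
      exact two_le_card_looseNbrs huf ((mem_neighborFinset _ _ _).mp hux) hx
    simp [hempty]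

lemma certOutside_nonempty (hJ : J ⊆ G.freeInterior) (hJind : G.IsIndepSet (J : Set V))
    {v : V} (hv : 2 ≤ G.degree v) (hv1 : #(leafNbrs G v) ≠ 1) : (G.certOutside J).Nonempty := by
  rcases Nat.lt_or_ge #(leafNbrs G v) 1 with h0 | h2
  · have hvf : G.IsFree v := ⟨hv, card_eq_zero.mp (by omega)⟩
    by_cases hvJ : v ∈ J
    · obtain ⟨w, hvw⟩ := (G.degree_pos_iff_exists_adj v).mp (by omega)
      refine ⟨w, mem_certOutside.mpr (.inl ⟨(mem_freeInterior.mp (hJ hvJ)).2 w hvw, ?_⟩)⟩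
      exact fun hwJ => hJind hvJ hwJ hvw.ne hvw
    · exact ⟨v, mem_certOutside.mpr (.inl ⟨hvf, hvJ⟩)⟩
  · obtain ⟨l, hl⟩ := card_pos.mp (by omega : 0 < #(leafNbrs G v))
    obtain ⟨hvl, hl⟩ := mem_leafNbrs.mp hl
    have hsub : leafNbrs G v ⊆ G.looseNbrs v :=
      fun x hx => mem_filter.mpr ⟨(mem_filter.mp hx).1, .inl (mem_filter.mp hx).2⟩
    exact ⟨l, mem_certOutside.mpr (.inr ⟨hl, v, by simpa using hvl.symm,
      (by omega : 2 ≤ _).trans (card_le_card hsub)⟩)⟩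

end certOutside

end SimpleGraph

open SimpleGraph

section

variable {G : SimpleGraph V} [DecidableRel G.Adj]

lemma isCertDomSet_univ : IsCertDomSet G univ :=
  ⟨fun v hv => absurd (mem_univ v) hv, fun v _ => .inl (by simp)⟩

lemma isCertDomSet_compl {S : Finset V} (hdom : ∀ s ∈ S, ∃ u ∉ S, G.Adj u s)
    (hcert : ∀ u ∉ S, #(G.neighborFinset u ∩ S) ≠ 1) : IsCertDomSet G Sᶜ := by
  refine ⟨fun v hv => ?_, fun u hu => ?_⟩
  · obtain ⟨u, hu, huv⟩ := hdom v (by simpa using hv)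
    exact ⟨u, by simpa using hu, huv⟩
  · have hS : G.neighborFinset u \ Sᶜ = G.neighborFinset u ∩ S := by ext; simp
    have := hcert u (by simpa using hu)
    rw [hS]
    omega

lemma IsCertDomSet.mem_of_adj_leaf {D : Finset V} (hD : IsCertDomSet G D) {l w : V}
    (hl : IsLeaf G l) (hlw : G.Adj l w) : w ∈ D := by
  by_cases hlD : l ∈ D
  · by_contra hwD
    have hpos : 0 < #(G.neighborFinset l \ D) := card_pos.mpr ⟨w, by simpa using ⟨hlw, hwD⟩⟩
    have hle : #(G.neighborFinset l \ D) ≤ 1 :=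
      (card_le_card sdiff_subset).trans (by rw [card_neighborFinset_eq_degree, hl])
    rcases hD.2 l hlD with h | h <;> omega
  · obtain ⟨u, huD, hul⟩ := hD.1 l hlD
    rwa [eq_of_adj_of_isLeaf hl hlw hul.symm]

lemma IsCertDomSet.exists_adj_with_two_outside_nbrs {D : Finset V} (hD : IsCertDomSet G D) {v : V}
    (hv : v ∉ D) : ∃ u ∈ D, G.Adj u v ∧ ∃ x ∉ D, x ≠ v ∧ G.Adj u x := by
  obtain ⟨u, huD, huv⟩ := hD.1 v hv
  have hvout : v ∈ G.neighborFinset u \ D := by simpa using ⟨huv, hv⟩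
  have htwo : 1 < #(G.neighborFinset u \ D) := by
    rcases hD.2 u huD with h | h
    · exact absurd (card_pos.mpr ⟨v, hvout⟩) (by omega)
    · omega
  obtain ⟨x, hx, hxv⟩ := exists_mem_ne htwo v
  rw [mem_sdiff, mem_neighborFinset] at hx
  exact ⟨u, huD, huv, x, hx.2, hxv, hx.1⟩

lemma IsCertDomSet.eq_univ (h : ∀ v : V, G.degree v = 0 ∨ IsLeaf G v ∨ IsWeakSupport G v)
    {D : Finset V} (hD : IsCertDomSet G D) : D = univ := by
  have isLeaf_of_notMem {y u : V} (hy : y ∉ D) (huy : G.Adj u y) : IsLeaf G y := by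
    rcases h y with h0 | h1 | hw
    · exact absurd h0 (G.degree_pos_iff_exists_adj y |>.mpr ⟨u, huy.symm⟩).ne'
    · exact h1
    · obtain ⟨l, hl⟩ := card_pos.mp (hw ▸ Nat.one_pos)
      obtain ⟨hyl, hl⟩ := mem_leafNbrs.mp hl
      exact absurd (hD.mem_of_adj_leaf hl hyl.symm) hy
  refine eq_univ_of_forall fun v => by_contra fun hv => ?_
  obtain ⟨u, -, huv, x, hx, hxv, hux⟩ := hD.exists_adj_with_two_outside_nbrs hv
  have hpair : {x, v} ⊆ leafNbrs G u := by
    simp only [insert_subset_iff, singleton_subset_iff, mem_leafNbrs]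
    exact ⟨⟨hux, isLeaf_of_notMem hx hux⟩, huv, isLeaf_of_notMem hv huv⟩
  have htwo : 2 ≤ #(leafNbrs G u) := card_pair hxv ▸ card_le_card hpair
  have := card_leafNbrs_le_degree (G := G) u
  rcases h u with h0 | h1 | hw <;> omega

lemma exists_isCertDomSet_card_lt {v : V} (hv : 2 ≤ G.degree v) (hv1 : #(leafNbrs G v) ≠ 1) :
    ∃ D : Finset V, IsCertDomSet G D ∧ #D < Fintype.card V := by
  obtain ⟨J, hJ, hJind, hJdom⟩ := G.exists_isIndepSet_forall_adj G.freeInterior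
  exact ⟨(G.certOutside J)ᶜ,
    isCertDomSet_compl (fun _ => exists_adj_notMem_certOutside hJ hJdom)
      (fun _ => card_neighborFinset_inter_certOutside_ne_one hJ hJind),
    (card_compl_lt_iff_nonempty _).mpr (certOutside_nonempty hJ hJind hv hv1)⟩

lemma gammaCer_le {D : Finset V} (hD : IsCertDomSet G D) : gammaCer G ≤ #D :=
  Nat.sInf_le ⟨D, hD, rfl⟩

lemma exists_isCertDomSet_card_eq_gammaCer :
    ∃ D : Finset V, IsCertDomSet G D ∧ #D = gammaCer G :=
  Nat.sInf_mem (s := {n | ∃ D : Finset V, IsCertDomSet G D ∧ #D = n})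
    ⟨_, univ, isCertDomSet_univ, card_univ⟩

end

theorem gammaCer_eq_card_iff (G : SimpleGraph V) [DecidableRel G.Adj] :
    gammaCer G = Fintype.card V ↔
      ∀ v : V, G.degree v = 0 ∨ IsLeaf G v ∨ IsWeakSupport G v := by
  constructor
  · intro hγ
    by_contra! ⟨v, h0, h1, hw⟩
    obtain ⟨D, hD, hlt⟩ := exists_isCertDomSet_card_lt (by omega : 2 ≤ G.degree v) hw
    have := gammaCer_le hD
    omega
  · intro h
    obtain ⟨D, hD, hcard⟩ := exists_isCertDomSet_card_eq_gammaCer (G := G)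
    rw [← hcard, hD.eq_univ h, card_univ]
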